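/- The function u ↦ u²·Φ(−u/2) on (0,∞), where Φ is the standard normal CDF, has a unique critical point u* > 0 solving 2Φ(−u/2) = (u/2)φ(u/2), this critical point is the global maximum, and 2Φ(−u*/2) ∈ (0.23, 0.24). -/

import Mathlib

/-!
Write `g u = 2 Φ(-u/2) - (u/2) φ(u/2)`. Then `(u² Φ(-u/2))' = u g u` and
`g' u = φ(u/2) (u²/8 - 3/2)`, so `g` is strictly decreasing on `[0, 3]`, while Mills' ratio
`Φ(-x) ≤ φ(x)/x` makes `g` negative on `[3, ∞)`. Taylor bounds for `exp (-t²/2)` and its integral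
show `g 2.3 > 0 > g 2.44`, so `g` has exactly one positive zero `u*`, and `u² Φ(-u/2)` increases
before it and decreases after it. At `u*` the acceptance rate `2 Φ(-u*/2)` equals `x φ(x)` with
`x = u*/2 ∈ (1.15, 1.22)`, and `x φ(x)` is decreasing for `x ≥ 1`.
-/

open ProbabilityTheory

/-- Standard normal CDF. -/
noncomputable def stdNormalCDF (x : ℝ) : ℝ :=
  ∫ t in Set.Iic x, ProbabilityTheory.gaussianPDFReal 0 1 t

open Real MeasureTheory Set Filter Topology Finset
open scoped Nat

noncomputable def stdNormalPDF (x : ℝ) : ℝ := (√(2 * π))⁻¹ * exp (-x ^ 2 / 2)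

lemma gaussianPDFReal_zero_one : gaussianPDFReal 0 1 = stdNormalPDF := by
  ext x
  simp [gaussianPDFReal, stdNormalPDF]

lemma stdNormalPDF_pos (x : ℝ) : 0 < stdNormalPDF x := by
  unfold stdNormalPDF; positivity

lemma stdNormalPDF_neg (x : ℝ) : stdNormalPDF (-x) = stdNormalPDF x := by
  simp [stdNormalPDF]

lemma continuous_stdNormalPDF : Continuous stdNormalPDF := by
  unfold stdNormalPDF; fun_prop

lemma integrable_stdNormalPDF : Integrable stdNormalPDF := by
  simpa [gaussianPDFReal_zero_one] using integrable_gaussianPDFReal 0 1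

lemma integral_stdNormalPDF : ∫ x, stdNormalPDF x = 1 := by
  simpa [gaussianPDFReal_zero_one] using integral_gaussianPDFReal_eq_one 0 one_ne_zero

lemma hasDerivAt_stdNormalPDF (x : ℝ) : HasDerivAt stdNormalPDF (-x * stdNormalPDF x) x := by
  have hexp : HasDerivAt (fun t : ℝ => -t ^ 2 / 2) (-x) x := by
    simpa [neg_div] using ((hasDerivAt_pow 2 x).div_const 2).fun_neg
  exact (hexp.exp.const_mul _).congr_deriv (by simp only [stdNormalPDF]; ring)

lemma tendsto_stdNormalPDF_atBot : Tendsto stdNormalPDF atBot (𝓝 0) := by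
  have hsq : Tendsto (fun x : ℝ => x ^ 2) atBot atTop := by
    simpa [Function.comp_def] using
      (tendsto_pow_atTop (α := ℝ) two_ne_zero).comp tendsto_neg_atBot_atTop
  have h : Tendsto (fun x : ℝ => -x ^ 2 / 2) atBot atBot := by
    simpa [neg_div] using (tendsto_neg_atTop_atBot.comp hsq).atBot_div_const two_pos
  have hpdf := (tendsto_exp_atBot.comp h).const_mul (√(2 * π))⁻¹
  rwa [mul_zero] at hpdf

lemma stdNormalCDF_zero : stdNormalCDF 0 = 1 / 2 := by
  have hsymm : ∫ t in Iic (0 : ℝ), stdNormalPDF t = ∫ t in Ioi (0 : ℝ), stdNormalPDF t := by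
    simpa [stdNormalPDF_neg] using integral_comp_neg_Iic 0 stdNormalPDF
  have htotal := intervalIntegral.integral_Iic_add_Ioi (b := 0)
    integrable_stdNormalPDF.integrableOn integrable_stdNormalPDF.integrableOn
  rw [integral_stdNormalPDF, ← hsymm] at htotal
  rw [stdNormalCDF, gaussianPDFReal_zero_one]
  linarith

lemma stdNormalCDF_eq_half_add (x : ℝ) :
    stdNormalCDF x = 1 / 2 + ∫ t in (0 : ℝ)..x, stdNormalPDF t := by
  rw [← stdNormalCDF_zero, stdNormalCDF, stdNormalCDF, gaussianPDFReal_zero_one,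
    ← intervalIntegral.integral_Iic_sub_Iic integrable_stdNormalPDF.integrableOn
      integrable_stdNormalPDF.integrableOn]
  ring

lemma stdNormalCDF_neg (x : ℝ) :
    stdNormalCDF (-x) = 1 / 2 - ∫ t in (0 : ℝ)..x, stdNormalPDF t := by
  have h := intervalIntegral.integral_comp_neg (a := 0) (b := x) stdNormalPDF
  simp only [stdNormalPDF_neg, neg_zero] at h
  rw [stdNormalCDF_eq_half_add, intervalIntegral.integral_symm, ← h]
  ring

lemma hasDerivAt_stdNormalCDF (x : ℝ) : HasDerivAt stdNormalCDF (stdNormalPDF x) x := by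
  have h := ((continuous_stdNormalPDF.integral_hasStrictDerivAt 0 x).hasDerivAt).const_add (1 / 2)
  simpa only [← stdNormalCDF_eq_half_add] using h

lemma integrable_neg_mul_stdNormalPDF : Integrable fun t => -t * stdNormalPDF t := by
  refine ((integrable_mul_exp_neg_mul_sq (b := 1 / 2) one_half_pos).const_mul
    (-(√(2 * π))⁻¹)).congr (ae_of_all _ fun t => ?_)
  simp only [stdNormalPDF]; ring_nf

lemma integral_Iic_neg_mul_stdNormalPDF (a : ℝ) :
    ∫ t in Iic a, -t * stdNormalPDF t = stdNormalPDF a := by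
  simpa using integral_Iic_of_hasDerivAt_of_tendsto continuous_stdNormalPDF.continuousWithinAt
    (fun t _ => hasDerivAt_stdNormalPDF t) integrable_neg_mul_stdNormalPDF.integrableOn
    tendsto_stdNormalPDF_atBot

lemma stdNormalCDF_neg_le {x : ℝ} (hx : 0 < x) : stdNormalCDF (-x) ≤ stdNormalPDF x / x := by
  have hle : ∫ t in Iic (-x), stdNormalPDF t ≤ ∫ t in Iic (-x), x⁻¹ * (-t * stdNormalPDF t) := by
    refine setIntegral_mono_on integrable_stdNormalPDF.integrableOn
      ((integrable_neg_mul_stdNormalPDF.const_mul x⁻¹).integrableOn) measurableSet_Iic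
      fun t (ht : t ≤ -x) => ?_
    have h1 : 1 ≤ x⁻¹ * -t := by rw [← div_eq_inv_mul, le_div_iff₀ hx]; linarith
    nlinarith [stdNormalPDF_pos t]
  rwa [integral_const_mul, integral_Iic_neg_mul_stdNormalPDF, stdNormalPDF_neg, inv_mul_eq_div,
    ← gaussianPDFReal_zero_one, ← stdNormalCDF, gaussianPDFReal_zero_one] at hle

lemma abs_exp_neg_sq_half_sub_taylor_le {t : ℝ} (ht : t ^ 2 ≤ 2) {n : ℕ} (hn : 0 < n) :
    |exp (-t ^ 2 / 2) - ∑ m ∈ range n, (-1 / 2) ^ m / m ! * t ^ (2 * m)|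
      ≤ (n + 1) / (n ! * n * 2 ^ n) * t ^ (2 * n) := by
  have hs : |-t ^ 2 / 2| ≤ 1 := by rw [abs_le]; constructor <;> nlinarith [sq_nonneg t]
  have h := Real.exp_bound hs hn
  have hsum : ∑ m ∈ range n, (-t ^ 2 / 2) ^ m / m !
      = ∑ m ∈ range n, (-1 / 2) ^ m / m ! * t ^ (2 * m) :=
    sum_congr rfl fun m _ => by ring
  rw [hsum, abs_div, abs_neg, abs_of_nonneg (sq_nonneg t), abs_two] at h
  convert h using 1
  rw [div_pow, Nat.cast_succ]
  ring

lemma abs_integral_exp_neg_sq_half_sub_taylor_le {x : ℝ} (hx0 : 0 ≤ x) (hx : x ^ 2 ≤ 2) {n : ℕ}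
    (hn : 0 < n) :
    |(∫ t in (0 : ℝ)..x, exp (-t ^ 2 / 2))
        - ∑ m ∈ range n, (-1 / 2) ^ m / m ! * x ^ (2 * m + 1) / (2 * m + 1)|
      ≤ (n + 1) / (n ! * n * 2 ^ n) * x ^ (2 * n + 1) / (2 * n + 1) := by
  have htaylor : ∑ m ∈ range n, (-1 / 2) ^ m / m ! * x ^ (2 * m + 1) / (2 * m + 1)
      = ∫ t in (0 : ℝ)..x, ∑ m ∈ range n, (-1 / 2) ^ m / m ! * t ^ (2 * m) := by
    rw [intervalIntegral.integral_finsetSum fun m _ =>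
      (by fun_prop : Continuous _).intervalIntegrable 0 x]
    refine sum_congr rfl fun m _ => ?_
    rw [intervalIntegral.integral_const_mul, integral_pow]
    push_cast
    ring
  have herror : ∫ t in (0 : ℝ)..x, (n + 1) / (n ! * n * 2 ^ n) * t ^ (2 * n)
      = (n + 1) / (n ! * n * 2 ^ n) * x ^ (2 * n + 1) / (2 * n + 1) := by
    rw [intervalIntegral.integral_const_mul, integral_pow]
    push_cast
    ring
  rw [htaylor, ← herror, ← intervalIntegral.integral_sub
    ((by fun_prop : Continuous _).intervalIntegrable 0 x)
    ((by fun_prop : Continuous _).intervalIntegrable 0 x), ← Real.norm_eq_abs]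
  refine intervalIntegral.norm_integral_le_of_norm_le hx0 (ae_of_all _ fun t ht => ?_) ?_
  · exact abs_exp_neg_sq_half_sub_taylor_le (by nlinarith [ht.1, ht.2]) hn
  · exact (by fun_prop : Continuous _).intervalIntegrable 0 x

noncomputable def criticalGap (u : ℝ) : ℝ :=
  2 * stdNormalCDF (-u / 2) - u / 2 * stdNormalPDF (u / 2)

lemma criticalGap_eq_one_sub (u : ℝ) :
    criticalGap u = 1 - (2 * (∫ t in (0 : ℝ)..u / 2, exp (-t ^ 2 / 2))
      + u / 2 * exp (-(u / 2) ^ 2 / 2)) / √(2 * π) := by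
  rw [criticalGap, neg_div, stdNormalCDF_neg]
  simp only [stdNormalPDF, intervalIntegral.integral_const_mul]
  field_simp
  ring

lemma hasDerivAt_stdNormalCDF_neg_div_two (u : ℝ) :
    HasDerivAt (fun u => stdNormalCDF (-u / 2)) (-stdNormalPDF (u / 2) / 2) u := by
  have h := (hasDerivAt_stdNormalCDF (-u / 2)).comp u ((hasDerivAt_id' u).fun_neg.div_const 2)
  rw [show -u / 2 = -(u / 2) by ring, stdNormalPDF_neg] at h
  exact h.congr_deriv (by ring)

lemma hasDerivAt_criticalGap (u : ℝ) :
    HasDerivAt criticalGap (stdNormalPDF (u / 2) * (u ^ 2 / 8 - 3 / 2)) u := by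
  have hhalf := (hasDerivAt_id' u).div_const 2
  have hpdf := (hasDerivAt_stdNormalPDF (u / 2)).comp u hhalf
  exact (((hasDerivAt_stdNormalCDF_neg_div_two u).const_mul 2).sub (hhalf.mul hpdf)).congr_deriv
    (by simp only [Function.comp_apply]; ring)

noncomputable def efficiency (u : ℝ) : ℝ := u ^ 2 * stdNormalCDF (-u / 2)

lemma hasDerivAt_efficiency (u : ℝ) : HasDerivAt efficiency (u * criticalGap u) u :=
  ((hasDerivAt_pow 2 u).mul (hasDerivAt_stdNormalCDF_neg_div_two u)).congr_deriv
    (by simp only [criticalGap]; push_cast; ring)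

lemma continuous_criticalGap : Continuous criticalGap :=
  continuous_iff_continuousAt.2 fun u => (hasDerivAt_criticalGap u).continuousAt

lemma criticalGap_strictAntiOn : StrictAntiOn criticalGap (Icc 0 3) := by
  refine strictAntiOn_of_hasDerivWithinAt_neg (convex_Icc 0 3) continuous_criticalGap.continuousOn
    (fun u _ => (hasDerivAt_criticalGap u).hasDerivWithinAt) fun u hu => ?_
  rw [interior_Icc] at hu
  exact mul_neg_of_pos_of_neg (stdNormalPDF_pos _) (by nlinarith [hu.1, hu.2])

lemma criticalGap_neg_of_three_le {u : ℝ} (hu : 3 ≤ u) : criticalGap u < 0 := by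
  have hmills := stdNormalCDF_neg_le (x := u / 2) (by linarith)
  have hpdf := stdNormalPDF_pos (u / 2)
  rw [le_div_iff₀ (by linarith)] at hmills
  rw [criticalGap, neg_div]
  nlinarith [mul_pos hpdf (show 0 < (u / 2) ^ 2 - 2 by nlinarith)]

lemma lt_sqrt_two_pi : (2.505 : ℝ) < √(2 * π) :=
  (Real.lt_sqrt (by norm_num)).2 (by nlinarith [pi_gt_d2])

lemma sqrt_two_pi_lt : √(2 * π) < 2.51 :=
  (Real.sqrt_lt' (by norm_num)).2 (by nlinarith [pi_lt_d2])

lemma criticalGap_23_div_10_pos : 0 < criticalGap (23 / 10) := by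
  have hJ := (abs_le.1 (abs_integral_exp_neg_sq_half_sub_taylor_le (x := 23 / 20) (by norm_num)
    (by norm_num) (n := 6) (by norm_num))).2
  have hE := (abs_le.1 (abs_exp_neg_sq_half_sub_taylor_le (t := 23 / 20) (by norm_num)
    (n := 6) (by norm_num))).2
  have hS := lt_sqrt_two_pi
  rw [criticalGap_eq_one_sub, sub_pos, div_lt_one (by positivity)]
  norm_num [sum_range_succ, Nat.factorial] at hJ hE hS ⊢
  linarith

lemma criticalGap_61_div_25_neg : criticalGap (61 / 25) < 0 := by
  have hJ := (abs_le.1 (abs_integral_exp_neg_sq_half_sub_taylor_le (x := 61 / 50) (by norm_num)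
    (by norm_num) (n := 6) (by norm_num))).1
  have hE := (abs_le.1 (abs_exp_neg_sq_half_sub_taylor_le (t := 61 / 50) (by norm_num)
    (n := 6) (by norm_num))).1
  have hS := sqrt_two_pi_lt
  rw [criticalGap_eq_one_sub, sub_neg, one_lt_div (by positivity)]
  norm_num [sum_range_succ, Nat.factorial] at hJ hE hS ⊢
  linarith

lemma exists_criticalGap_eq_zero : ∃ us ∈ Ioo (23 / 10 : ℝ) (61 / 25), criticalGap us = 0 :=
  intermediate_value_Ioo' (by norm_num) continuous_criticalGap.continuousOn
    ⟨criticalGap_61_div_25_neg, criticalGap_23_div_10_pos⟩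

lemma criticalGap_pos_of_lt {us u : ℝ} (hus : criticalGap us = 0) (hus3 : us ≤ 3) (hu : 0 ≤ u)
    (h : u < us) : 0 < criticalGap u :=
  hus ▸ criticalGap_strictAntiOn ⟨hu, h.le.trans hus3⟩ ⟨hu.trans h.le, hus3⟩ h

lemma criticalGap_neg_of_gt {us u : ℝ} (hus : criticalGap us = 0) (hus0 : 0 ≤ us) (h : us < u) :
    criticalGap u < 0 := by
  rcases le_or_gt u 3 with hu3 | hu3
  · exact hus ▸ criticalGap_strictAntiOn ⟨hus0, h.le.trans hu3⟩ ⟨hus0.trans h.le, hu3⟩ h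
  · exact criticalGap_neg_of_three_le hu3.le

lemma eq_of_criticalGap_eq_zero {us u : ℝ} (hus : criticalGap us = 0) (hus0 : 0 ≤ us)
    (hus3 : us ≤ 3) (hu : 0 ≤ u) (h : criticalGap u = 0) : u = us := by
  rcases lt_trichotomy u us with hlt | heq | hgt
  · exact absurd h (criticalGap_pos_of_lt hus hus3 hu hlt).ne'
  · exact heq
  · exact absurd h (criticalGap_neg_of_gt hus hus0 hgt).ne

lemma efficiency_le {us u : ℝ} (hus : criticalGap us = 0) (hus0 : 0 ≤ us) (hus3 : us ≤ 3)
    (hu : 0 ≤ u) : efficiency u ≤ efficiency us := by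
  have hcont : Continuous efficiency :=
    continuous_iff_continuousAt.2 fun u => (hasDerivAt_efficiency u).continuousAt
  rcases le_total u us with hle | hle
  · refine monotoneOn_of_hasDerivWithinAt_nonneg (convex_Icc 0 us) hcont.continuousOn
      (fun x _ => (hasDerivAt_efficiency x).hasDerivWithinAt) (fun x hx => ?_)
      ⟨hu, hle⟩ ⟨hus0, le_rfl⟩ hle
    rw [interior_Icc] at hx
    exact mul_nonneg hx.1.le (criticalGap_pos_of_lt hus hus3 hx.1.le hx.2).le
  · refine antitoneOn_of_hasDerivWithinAt_nonpos (convex_Ici us) hcont.continuousOn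
      (fun x _ => (hasDerivAt_efficiency x).hasDerivWithinAt) (fun x hx => ?_)
      self_mem_Ici hle hle
    rw [interior_Ici] at hx
    exact mul_nonpos_of_nonneg_of_nonpos (hus0.trans hx.le) (criticalGap_neg_of_gt hus hus0 hx).le

lemma strictAntiOn_mul_stdNormalPDF : StrictAntiOn (fun x => x * stdNormalPDF x) (Ici 1) := by
  refine strictAntiOn_of_hasDerivWithinAt_neg (convex_Ici 1)
    (continuous_id.mul continuous_stdNormalPDF).continuousOn
    (fun x _ => ((hasDerivAt_id' x).mul (hasDerivAt_stdNormalPDF x)).hasDerivWithinAt)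
    fun x hx => ?_
  rw [interior_Ici] at hx
  have hx1 : 1 < x := hx
  nlinarith [mul_pos (stdNormalPDF_pos x) (show 0 < x ^ 2 - 1 by nlinarith)]

lemma mul_stdNormalPDF_23_div_20_lt : 23 / 20 * stdNormalPDF (23 / 20) < 0.24 := by
  have hE := (abs_le.1 (abs_exp_neg_sq_half_sub_taylor_le (t := 23 / 20) (by norm_num)
    (n := 6) (by norm_num))).2
  have hS := lt_sqrt_two_pi
  rw [stdNormalPDF, inv_mul_eq_div, mul_div_assoc', div_lt_iff₀ (by positivity)]
  norm_num [sum_range_succ, Nat.factorial] at hE hS ⊢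
  nlinarith

lemma lt_mul_stdNormalPDF_61_div_50 : 0.23 < 61 / 50 * stdNormalPDF (61 / 50) := by
  have hE := (abs_le.1 (abs_exp_neg_sq_half_sub_taylor_le (t := 61 / 50) (by norm_num)
    (n := 6) (by norm_num))).1
  have hS := sqrt_two_pi_lt
  rw [stdNormalPDF, inv_mul_eq_div, mul_div_assoc', lt_div_iff₀ (by positivity)]
  norm_num [sum_range_succ, Nat.factorial] at hE hS ⊢
  nlinarith

/-- The function u ↦ u²Φ(−u/2) on (0,∞) has a unique critical point u* > 0, solving
2Φ(−u/2) = (u/2)φ(u/2); this point is the global maximum on (0,∞), and the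
corresponding acceptance rate satisfies 2Φ(−u*/2) ∈ (0.23, 0.24). -/
theorem optimal_scaling_234 :
    ∃ us : ℝ, 0 < us ∧
      2 * stdNormalCDF (-us / 2) = (us / 2) * gaussianPDFReal 0 1 (us / 2) ∧
      (∀ u : ℝ, 0 < u →
        2 * stdNormalCDF (-u / 2) = (u / 2) * gaussianPDFReal 0 1 (u / 2) → u = us) ∧
      (∀ u : ℝ, 0 < u → u ^ 2 * stdNormalCDF (-u / 2) ≤ us ^ 2 * stdNormalCDF (-us / 2)) ∧
      0.23 < 2 * stdNormalCDF (-us / 2) ∧ 2 * stdNormalCDF (-us / 2) < 0.24 := by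
  obtain ⟨us, ⟨hlo, hhi⟩, hus⟩ := exists_criticalGap_eq_zero
  have hcrit (u : ℝ) :
      2 * stdNormalCDF (-u / 2) = u / 2 * gaussianPDFReal 0 1 (u / 2) ↔ criticalGap u = 0 := by
    rw [gaussianPDFReal_zero_one, criticalGap, sub_eq_zero]
  have hus0 : 0 ≤ us := by linarith
  have hus3 : us ≤ 3 := by linarith
  have hacc : 2 * stdNormalCDF (-us / 2) = us / 2 * stdNormalPDF (us / 2) := sub_eq_zero.1 hus
  refine ⟨us, by linarith, (hcrit us).2 hus, fun u hu h => ?_, fun u hu => ?_, ?_, ?_⟩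
  · exact eq_of_criticalGap_eq_zero hus hus0 hus3 hu.le ((hcrit u).1 h)
  · exact efficiency_le hus hus0 hus3 hu.le
  · rw [hacc]
    exact lt_mul_stdNormalPDF_61_div_50.trans (strictAntiOn_mul_stdNormalPDF
      (show (1 : ℝ) ≤ us / 2 by linarith) (show (1 : ℝ) ≤ 61 / 50 by norm_num) (by linarith))
  · rw [hacc]
    exact (strictAntiOn_mul_stdNormalPDF (show (1 : ℝ) ≤ 23 / 20 by norm_num)
      (show (1 : ℝ) ≤ us / 2 by linarith) (by linarith)).trans mul_stdNormalPDF_23_div_20_lt
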